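/- Let f: G → H be a morphism of flat affine group schemes over a complete DVR R with injective induced Hopf algebra map R[H] → R[G]. If G is prudent, then H is prudent. -/

import Mathlib

/-! Pushing a representation `ρ` of `H` forward along `f` gives a representation of `G` in which
`v` is still semi-invariant modulo every `π^(n+1)`, so prudence of `G` gives
`(1 ⊗ f)(ρ v) = v ⊗ b`. To descend this to `ρ v = v ⊗ a`, write `v = π^K • v₀` with `φ v₀ = 1`
for a linear form `φ`. Semi-invariance modulo `π^(K+1)` puts `ρ v` in `π^K • (V ⊗ A)`, and
contracting with `φ` then produces `a`, because `1 ⊗ f` is injective on `V ⊗ A` for `V` free. -/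

open TensorProduct

variable {R : Type} [CommRing R]

/-- `ρ : V → V ⊗ A` is a coaction (comodule structure): counit and coassociativity. -/
def IsCoaction {A V : Type} [CommRing A] [Bialgebra R A]
    [AddCommGroup V] [Module R V] (ρ : V →ₗ[R] V ⊗[R] A) : Prop :=
  (∀ v : V, (TensorProduct.rid R V)
      ((TensorProduct.map LinearMap.id (Coalgebra.counit (R := R) (A := A))) (ρ v)) = v) ∧
  (∀ v : V, (TensorProduct.assoc R V A A)
      ((TensorProduct.map ρ (LinearMap.id : A →ₗ[R] A)) (ρ v)) =
    (TensorProduct.map (LinearMap.id : V →ₗ[R] V) (Coalgebra.comul (R := R) (A := A))) (ρ v))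

/-- `v` is semi-invariant for the coaction `ρ`: the span of `v` is a subcomodule. -/
def IsSemiInvariant {A V : Type} [CommRing A] [Algebra R A]
    [AddCommGroup V] [Module R V] (ρ : V →ₗ[R] V ⊗[R] A) (v : V) : Prop :=
  ∀ x ∈ Submodule.span R {v},
    ρ x ∈ LinearMap.range
      (TensorProduct.map (Submodule.span R {v}).subtype (LinearMap.id : A →ₗ[R] A))

/-- The reduction of `v` modulo `π^(n+1) V` is semi-invariant: its span is a subcomodule
of `V/π^(n+1)V`, expressed via preimages in `V` and `V ⊗ A`. -/
def IsSemiInvariantMod {A V : Type} [CommRing A] [Algebra R A]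
    [AddCommGroup V] [Module R V] (π : R) (ρ : V →ₗ[R] V ⊗[R] A) (v : V) (n : ℕ) : Prop :=
  ∀ x ∈ Submodule.span R {v} ⊔
      LinearMap.range ((π ^ (n + 1)) • (LinearMap.id : V →ₗ[R] V)),
    ρ x ∈ LinearMap.range
        (TensorProduct.map (Submodule.span R {v}).subtype (LinearMap.id : A →ₗ[R] A)) ⊔
      LinearMap.range ((π ^ (n + 1)) • (LinearMap.id : V ⊗[R] A →ₗ[R] V ⊗[R] A))

/-- A flat affine group scheme with Hopf algebra `A` over `R` is prudent if, in every
representation on a finitely generated free `R`-module, every vector whose reduction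
modulo `π^(n+1)` is semi-invariant for all `n` is itself semi-invariant. -/
def Prudent (π : R) (A : Type) [CommRing A] [Bialgebra R A] : Prop :=
  ∀ (V : Type) [AddCommGroup V] [Module R V], Module.Finite R V → Module.Free R V →
    ∀ ρ : V →ₗ[R] V ⊗[R] A, IsCoaction ρ →
      ∀ v : V, (∀ n : ℕ, IsSemiInvariantMod π ρ v n) → IsSemiInvariant ρ v

section TensorSpan

variable {V A : Type*} [AddCommGroup V] [Module R V] [AddCommGroup A] [Module R A]

theorem mem_range_map_span_singleton_subtype_iff (v : V) (y : V ⊗[R] A) :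
    y ∈ LinearMap.range
        (TensorProduct.map (Submodule.span R {v}).subtype (LinearMap.id : A →ₗ[R] A)) ↔
      ∃ a : A, y = v ⊗ₜ a := by
  constructor
  · rintro ⟨z, rfl⟩
    induction z using TensorProduct.induction_on with
    | zero => exact ⟨0, by simp⟩
    | tmul s a =>
      obtain ⟨r, hr⟩ := Submodule.mem_span_singleton.mp s.2
      exact ⟨r • a, by simp [← hr, TensorProduct.smul_tmul]⟩
    | add z₁ z₂ h₁ h₂ =>
      obtain ⟨a₁, h₁⟩ := h₁
      obtain ⟨a₂, h₂⟩ := h₂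
      exact ⟨a₁ + a₂, by rw [map_add, h₁, h₂, TensorProduct.tmul_add]⟩
  · rintro ⟨a, rfl⟩
    exact ⟨⟨v, Submodule.mem_span_singleton_self v⟩ ⊗ₜ a, rfl⟩

theorem mem_range_map_span_singleton_subtype_sup_iff (v : V) (c : R) (y : V ⊗[R] A) :
    y ∈ LinearMap.range
          (TensorProduct.map (Submodule.span R {v}).subtype (LinearMap.id : A →ₗ[R] A)) ⊔
        LinearMap.range (c • (LinearMap.id : V ⊗[R] A →ₗ[R] V ⊗[R] A)) ↔
      ∃ (a : A) (z : V ⊗[R] A), y = v ⊗ₜ a + c • z := by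
  simp_rw [Submodule.mem_sup, mem_range_map_span_singleton_subtype_iff]
  simp only [LinearMap.mem_range, LinearMap.smul_apply, LinearMap.id_apply]
  constructor
  · rintro ⟨_, ⟨a, rfl⟩, _, ⟨z, rfl⟩, rfl⟩
    exact ⟨a, z, rfl⟩
  · rintro ⟨a, z, rfl⟩
    exact ⟨_, ⟨a, rfl⟩, _, ⟨z, rfl⟩, rfl⟩

end TensorSpan

section SemiInvariant

variable {A B V : Type} [CommRing A] [Algebra R A] [CommRing B] [Algebra R B]
  [AddCommGroup V] [Module R V] {ρ : V →ₗ[R] V ⊗[R] A} {v : V}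

theorem isSemiInvariant_iff : IsSemiInvariant ρ v ↔ ∃ a : A, ρ v = v ⊗ₜ a := by
  simp only [IsSemiInvariant, mem_range_map_span_singleton_subtype_iff]
  refine ⟨fun h => h v (Submodule.mem_span_singleton_self v), ?_⟩
  rintro ⟨a, ha⟩ x hx
  obtain ⟨r, rfl⟩ := Submodule.mem_span_singleton.mp hx
  exact ⟨r • a, by rw [map_smul, ha, TensorProduct.smul_tmul', TensorProduct.smul_tmul]⟩

theorem isSemiInvariantMod_iff {π : R} {n : ℕ} :
    IsSemiInvariantMod π ρ v n ↔ ∃ (a : A) (z : V ⊗[R] A), ρ v = v ⊗ₜ a + π ^ (n + 1) • z := by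
  simp only [IsSemiInvariantMod, mem_range_map_span_singleton_subtype_sup_iff]
  refine ⟨fun h => h v (Submodule.mem_sup_left (Submodule.mem_span_singleton_self v)), ?_⟩
  rintro ⟨a, z, ha⟩ x hx
  obtain ⟨_, hp, _, ⟨y, rfl⟩, rfl⟩ := Submodule.mem_sup.mp hx
  obtain ⟨r, rfl⟩ := Submodule.mem_span_singleton.mp hp
  refine ⟨r • a, r • z + ρ y, ?_⟩
  simp only [LinearMap.smul_apply, LinearMap.id_apply, map_add, map_smul, ha, smul_add,
    TensorProduct.smul_tmul', TensorProduct.smul_tmul, smul_comm r (π ^ (n + 1))]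
  abel

theorem IsSemiInvariantMod.lTensor {π : R} {n : ℕ} (h : IsSemiInvariantMod π ρ v n)
    (g : A →ₗ[R] B) : IsSemiInvariantMod π (g.lTensor V ∘ₗ ρ) v n := by
  obtain ⟨a, z, ha⟩ := isSemiInvariantMod_iff.mp h
  exact isSemiInvariantMod_iff.mpr ⟨g a, g.lTensor V z, by simp [ha]⟩

end SemiInvariant

theorem IsCoaction.lTensor {A B V : Type} [CommRing A] [Bialgebra R A] [CommRing B] [Bialgebra R B]
    [AddCommGroup V] [Module R V] {ρ : V →ₗ[R] V ⊗[R] A} (hρ : IsCoaction ρ) (f : A →ₗc[R] B) :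
    IsCoaction ((f : A →ₗ[R] B).lTensor V ∘ₗ ρ) := by
  have hcounit : TensorProduct.map LinearMap.id Coalgebra.counit ∘ₗ (f : A →ₗ[R] B).lTensor V =
      TensorProduct.map LinearMap.id Coalgebra.counit := by
    rw [LinearMap.lTensor, ← TensorProduct.map_comp, CoalgHomClass.counit_comp, LinearMap.id_comp]
  have hcomul : TensorProduct.map LinearMap.id Coalgebra.comul ∘ₗ (f : A →ₗ[R] B).lTensor V =
      (TensorProduct.map (f : A →ₗ[R] B) f).lTensor V ∘ₗ
        TensorProduct.map LinearMap.id Coalgebra.comul := by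
    rw [LinearMap.lTensor, LinearMap.lTensor, ← TensorProduct.map_comp, ← TensorProduct.map_comp,
      CoalgHomClass.map_comp_comul]
  have hassoc : ∀ y : V ⊗[R] A,
      TensorProduct.assoc R V B B (TensorProduct.map ((f : A →ₗ[R] B).lTensor V ∘ₗ ρ) LinearMap.id
          ((f : A →ₗ[R] B).lTensor V y)) =
        (TensorProduct.map (f : A →ₗ[R] B) f).lTensor V
          (TensorProduct.assoc R V A A (TensorProduct.map ρ LinearMap.id y)) := by
    intro y
    induction y using TensorProduct.induction_on with
    | zero => simp
    | tmul x a => simp [LinearMap.lTensor, TensorProduct.map_map_assoc]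
    | add y₁ y₂ h₁ h₂ => simp only [map_add, h₁, h₂]
  constructor
  · intro v
    rw [LinearMap.comp_apply, ← LinearMap.comp_apply (TensorProduct.map _ _), hcounit, hρ.1]
  · intro v
    rw [LinearMap.comp_apply, hassoc, hρ.2]
    exact (LinearMap.congr_fun hcomul (ρ v)).symm

theorem exists_smul_eq_smul_tmul_of_lTensor_eq {V A B : Type*} [AddCommGroup V] [Module R V]
    [Module.Flat R V] [AddCommGroup A] [Module R A] [AddCommGroup B] [Module R B]
    {g : A →ₗ[R] B} (hg : Function.Injective g) {φ : Module.Dual R V} {v₀ : V} (hφ : φ v₀ = 1)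
    (s : R) {w : V ⊗[R] A} {b : B} (hw : g.lTensor V (s • w) = (s • v₀) ⊗ₜ b) :
    ∃ a : A, s • w = (s • v₀) ⊗ₜ a := by
  let contractA : V ⊗[R] A →ₗ[R] A := TensorProduct.lid R A ∘ₗ φ.rTensor A
  let contractB : V ⊗[R] B →ₗ[R] B := TensorProduct.lid R B ∘ₗ φ.rTensor B
  have hcontract : ∀ y, g (contractA y) = contractB (g.lTensor V y) := by
    intro y
    induction y using TensorProduct.induction_on with
    | zero => simp
    | tmul x a => simp [contractA, contractB]
    | add y₁ y₂ h₁ h₂ => simp only [map_add, h₁, h₂]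
  have hsb : s • g (contractA w) = s • b := by
    rw [← map_smul, ← map_smul, hcontract, hw]
    simp [contractB, hφ]
  refine ⟨contractA w, Module.Flat.lTensor_preserves_injective_linearMap g hg ?_⟩
  rw [hw, TensorProduct.smul_tmul, ← hsb, LinearMap.lTensor_tmul, TensorProduct.smul_tmul]

theorem IsDiscreteValuationRing.exists_eq_pow_smul_of_ne_zero [IsDomain R]
    [IsDiscreteValuationRing R] {π : R} (hπ : Irreducible π) {V : Type*} [AddCommGroup V]
    [Module R V] [Module.Free R V] [Module.Finite R V] {v : V} (hv : v ≠ 0) :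
    ∃ (K : ℕ) (v₀ : V) (φ : Module.Dual R V), v = π ^ K • v₀ ∧ φ v₀ = 1 := by
  classical
  let e := Module.Free.chooseBasis R V
  set c := e.equivFun v
  have hI : Ideal.span (Set.range c) ≠ ⊥ := by
    refine fun h => hv (e.equivFun.injective ?_)
    funext i
    simpa [c] using Ideal.span_eq_bot.mp h (c i) ⟨i, rfl⟩
  obtain ⟨K, hK⟩ := IsDiscreteValuationRing.ideal_eq_span_pow_irreducible hI hπ
  have hdvd : ∀ i, π ^ K ∣ c i := fun i =>
    Ideal.mem_span_singleton.mp (hK ▸ Ideal.subset_span ⟨i, rfl⟩)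
  choose d hd using hdvd
  obtain ⟨r, hr⟩ :=
    Ideal.mem_span_range_iff_exists_fun.mp (hK ▸ Ideal.mem_span_singleton_self (π ^ K))
  let φ : Module.Dual R V := ∑ i, r i • e.coord i
  have hv₀ : v = π ^ K • e.equivFun.symm d := e.equivFun.injective <| funext fun i => by
    rw [map_smul, LinearEquiv.apply_symm_apply, Pi.smul_apply, smul_eq_mul, ← hd]
  refine ⟨K, e.equivFun.symm d, φ, hv₀, mul_left_cancel₀ (pow_ne_zero K hπ.ne_zero) ?_⟩
  rw [← smul_eq_mul, ← map_smul, ← hv₀, mul_one, ← hr]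
  simp [φ, c]

theorem stmt9 [IsDomain R] [IsDiscreteValuationRing R]
    (π : R) (hπ : Irreducible π)
    {A B : Type} [CommRing A] [HopfAlgebra R A] [CommRing B] [HopfAlgebra R B]
    (f : A →ₐc[R] B) (hf : Function.Injective f)
    (hG : Prudent π B) : Prudent π A := by
  intro V _ _ _ _ ρ hρ v hmod
  rw [isSemiInvariant_iff]
  rcases eq_or_ne v 0 with rfl | hv
  · exact ⟨0, by simp⟩
  obtain ⟨b, hb⟩ := isSemiInvariant_iff.mp <|
    hG V ‹_› ‹_› ((f.toCoalgHom : A →ₗ[R] B).lTensor V ∘ₗ ρ) (hρ.lTensor f.toCoalgHom) v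
      fun n => (hmod n).lTensor _
  obtain ⟨K, v₀, φ, rfl, hφ⟩ := IsDiscreteValuationRing.exists_eq_pow_smul_of_ne_zero hπ hv
  obtain ⟨t, z, htz⟩ := isSemiInvariantMod_iff.mp (hmod K)
  have hρv : ρ (π ^ K • v₀) = π ^ K • (v₀ ⊗ₜ t + π • z) := by
    rw [htz, smul_add, TensorProduct.smul_tmul', smul_smul, pow_succ]
  rw [LinearMap.comp_apply, hρv] at hb
  rw [hρv]
  exact exists_smul_eq_smul_tmul_of_lTensor_eq hf hφ _ hb
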